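/- Let W ∈ L²([0,1]²) be nonnegative with ess-sup_x ∫₀¹ W(x,y) dy ≤ W₂ < ∞, let f(u,t) be Lipschitz in u with constant L_f, and D Lipschitz with constant L_D. Then the map R(v)(x) = f(v(x), t) + ∫₀¹ W(x,y) D(v(y) − v(x)) dy is Lipschitz continuous on L²([0,1]) with Lipschitz constant at most L_f + L_D(‖W‖_{L²([0,1]²)} + W₂), uniformly in t. -/

import Mathlib

open MeasureTheory Set

/-- The unit interval `(0,1]` (up to a null set equal to `[0,1]`). -/
noncomputable def unitI : Set ℝ := Set.Ioc 0 1

/-- The grid cell `((⌈nx⌉-1)/n, ⌈nx⌉/n]` of the uniform `n`-partition containing `x`. -/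
noncomputable def cell (n : ℕ) (x : ℝ) : Set ℝ :=
  Set.Ioc ((⌈(n : ℝ) * x⌉ - 1 : ℝ) / n) ((⌈(n : ℝ) * x⌉ : ℝ) / n)

/-- Step-function approximation of a kernel `W` on the uniform `n × n` grid:
`W_n(x,y) = n² ∫_{I_{n,i} × I_{n,j}} W` for `(x,y) ∈ I_{n,i} × I_{n,j}`. -/
noncomputable def stepApprox (n : ℕ) (W : ℝ → ℝ → ℝ) (x y : ℝ) : ℝ :=
  (n : ℝ) ^ 2 * ∫ p in (cell n x) ×ˢ (cell n y), W p.1 p.2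

/-- The `L²([0,1]²)` norm of a kernel. -/
noncomputable def l2norm2 (V : ℝ → ℝ → ℝ) : ℝ :=
  Real.sqrt (∫ p in unitI ×ˢ unitI, (V p.1 p.2) ^ 2)

/-- The `L²([0,1])` norm of a function. -/
noncomputable def l2norm (v : ℝ → ℝ) : ℝ :=
  Real.sqrt (∫ x in unitI, (v x) ^ 2)

/-- The nonlocal operator `K_V(v)(x) = ∫₀¹ V(x,y) D(v(y) - v(x)) dy`. -/
noncomputable def Kop (V : ℝ → ℝ → ℝ) (D : ℝ → ℝ) (v : ℝ → ℝ) (x : ℝ) : ℝ :=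
  ∫ y in unitI, V x y * D (v y - v x)

open scoped NNReal ENNReal

/-! Write `w = u - v`. The two Lipschitz bounds give, for a.e. `x`,
`|R u x - R v x| ≤ (L_f + L_D W₂) |w x| + L_D ∫ W(x,y) |w y| dy`,
the row-sum bound absorbing the `|w x|` part of `|w y - w x| ≤ |w y| + |w x|`. By Cauchy–Schwarz
in `y`, the integral operator with kernel `W` maps `L²` to `L²` with norm at most `‖W‖_{L²}`
(the Hilbert–Schmidt bound), and Minkowski's inequality in `L²` finishes the estimate. -/

namespace MeasureTheory

variable {α β : Type*} [MeasurableSpace α] [MeasurableSpace β] {μ : Measure α} {ν : Measure β}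

lemma MemLp.sqrt_integral_sq_eq {f : α → ℝ} (hf : MemLp f 2 μ) :
    √(∫ x, f x ^ 2 ∂μ) = (eLpNorm f 2 μ).toReal := by
  rw [hf.eLpNorm_eq_integral_rpow_norm two_ne_zero ENNReal.ofNat_ne_top,
    ENNReal.toReal_ofReal (by positivity), Real.sqrt_eq_rpow]
  simp [sq_abs]

lemma sqrt_integral_sq_add_le {f g : α → ℝ} (hf : MemLp f 2 μ) (hg : MemLp g 2 μ) :
    √(∫ x, (f x + g x) ^ 2 ∂μ) ≤ √(∫ x, f x ^ 2 ∂μ) + √(∫ x, g x ^ 2 ∂μ) := by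
  rw [show (fun x => (f x + g x) ^ 2) = fun x => (f + g) x ^ 2 from rfl,
    (hf.add hg).sqrt_integral_sq_eq, hf.sqrt_integral_sq_eq, hg.sqrt_integral_sq_eq,
    ← ENNReal.toReal_add hf.eLpNorm_ne_top hg.eLpNorm_ne_top]
  exact ENNReal.toReal_mono (ENNReal.add_ne_top.2 ⟨hf.eLpNorm_ne_top, hg.eLpNorm_ne_top⟩)
    (eLpNorm_add_le hf.1 hg.1 one_le_two)

lemma sqrt_integral_sq_const_mul (c : ℝ) (f : α → ℝ) :
    √(∫ x, (c * f x) ^ 2 ∂μ) = |c| * √(∫ x, f x ^ 2 ∂μ) := by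
  simp_rw [mul_pow]
  rw [integral_const_mul, Real.sqrt_mul (sq_nonneg c), Real.sqrt_sq_eq_abs]

lemma sqrt_integral_sq_abs (f : α → ℝ) :
    √(∫ x, |f x| ^ 2 ∂μ) = √(∫ x, f x ^ 2 ∂μ) := by
  simp_rw [sq_abs]

lemma sqrt_integral_sq_le_of_ae_abs_le {f g : α → ℝ} (hg : MemLp g 2 μ)
    (h : ∀ᵐ x ∂μ, |f x| ≤ g x) :
    √(∫ x, f x ^ 2 ∂μ) ≤ √(∫ x, g x ^ 2 ∂μ) := by
  refine Real.sqrt_le_sqrt (integral_mono_of_nonneg (ae_of_all _ fun x => sq_nonneg _)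
    hg.integrable_sq ?_)
  filter_upwards [h] with x hx
  exact sq_le_sq' (by linarith [abs_le.1 hx |>.1, neg_abs_le (f x)]) (le_abs_self _ |>.trans hx)

lemma sqrt_integral_sq_le_of_ae_abs_le_add {F f g : α → ℝ} {a b : ℝ} (ha : 0 ≤ a) (hb : 0 ≤ b)
    (hf : MemLp f 2 μ) (hg : MemLp g 2 μ) (h : ∀ᵐ x ∂μ, |F x| ≤ a * |f x| + b * g x) :
    √(∫ x, F x ^ 2 ∂μ) ≤ a * √(∫ x, f x ^ 2 ∂μ) + b * √(∫ x, g x ^ 2 ∂μ) := by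
  have hf' : MemLp (fun x => a * |f x|) 2 μ := hf.abs.const_mul a
  have hg' : MemLp (fun x => b * g x) 2 μ := hg.const_mul b
  calc √(∫ x, F x ^ 2 ∂μ) ≤ √(∫ x, (a * |f x| + b * g x) ^ 2 ∂μ) :=
        sqrt_integral_sq_le_of_ae_abs_le (hf'.add hg') h
    _ ≤ √(∫ x, (a * |f x|) ^ 2 ∂μ) + √(∫ x, (b * g x) ^ 2 ∂μ) := sqrt_integral_sq_add_le hf' hg'
    _ = a * √(∫ x, f x ^ 2 ∂μ) + b * √(∫ x, g x ^ 2 ∂μ) := by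
      rw [sqrt_integral_sq_const_mul, sqrt_integral_sq_const_mul, sqrt_integral_sq_abs,
        abs_of_nonneg ha, abs_of_nonneg hb]

lemma abs_integral_mul_le_sqrt_mul_sqrt {f g : α → ℝ} (hf : MemLp f 2 μ) (hg : MemLp g 2 μ) :
    |∫ x, f x * g x ∂μ| ≤ √(∫ x, f x ^ 2 ∂μ) * √(∫ x, g x ^ 2 ∂μ) := by
  have holder := integral_mul_norm_le_Lp_mul_Lq Real.HolderConjugate.two_two
    (by simpa using hf) (by simpa using hg)
  simp only [Real.norm_eq_abs, Real.rpow_two, sq_abs] at holder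
  rw [← Real.sqrt_eq_rpow, ← Real.sqrt_eq_rpow] at holder
  calc |∫ x, f x * g x ∂μ| ≤ ∫ x, |f x * g x| ∂μ := abs_integral_le_integral_abs
    _ = ∫ x, |f x| * |g x| ∂μ := by simp_rw [abs_mul]
    _ ≤ _ := holder

section HilbertSchmidt

variable [SFinite μ] [SFinite ν] {K : α → β → ℝ} {h : β → ℝ}

lemma MemLp.ae_memLp_two_prodMk_left (hK : MemLp (fun p : α × β => K p.1 p.2) 2 (μ.prod ν)) :
    ∀ᵐ x ∂μ, MemLp (K x) 2 ν := by
  filter_upwards [hK.integrable_sq.prod_right_ae, hK.1.prodMk_left] with x hsq hmeas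
  exact (memLp_two_iff_integrable_sq hmeas).2 hsq

lemma ae_sq_integral_mul_le (hK : MemLp (fun p : α × β => K p.1 p.2) 2 (μ.prod ν))
    (hh : MemLp h 2 ν) :
    ∀ᵐ x ∂μ, (∫ y, K x y * h y ∂ν) ^ 2 ≤ (∫ y, K x y ^ 2 ∂ν) * ∫ y, h y ^ 2 ∂ν := by
  filter_upwards [hK.ae_memLp_two_prodMk_left] with x hKx
  calc (∫ y, K x y * h y ∂ν) ^ 2 = |∫ y, K x y * h y ∂ν| ^ 2 := (sq_abs _).symm
    _ ≤ (√(∫ y, K x y ^ 2 ∂ν) * √(∫ y, h y ^ 2 ∂ν)) ^ 2 :=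
      pow_le_pow_left₀ (abs_nonneg _) (abs_integral_mul_le_sqrt_mul_sqrt hKx hh) 2
    _ = (∫ y, K x y ^ 2 ∂ν) * ∫ y, h y ^ 2 ∂ν := by
      rw [mul_pow, Real.sq_sqrt (integral_nonneg fun _ => sq_nonneg _),
        Real.sq_sqrt (integral_nonneg fun _ => sq_nonneg _)]

lemma memLp_two_integral_mul (hK : MemLp (fun p : α × β => K p.1 p.2) 2 (μ.prod ν))
    (hh : MemLp h 2 ν) :
    MemLp (fun x => ∫ y, K x y * h y ∂ν) 2 μ := by
  have hmeas : AEStronglyMeasurable (fun x => ∫ y, K x y * h y ∂ν) μ :=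
    (hK.1.mul hh.1.comp_snd).integral_prod_right'
  refine (memLp_two_iff_integrable_sq hmeas).2 <|
    (hK.integrable_sq.integral_prod_left.mul_const (∫ y, h y ^ 2 ∂ν)).mono' (hmeas.pow 2) ?_
  filter_upwards [ae_sq_integral_mul_le hK hh] with x hx
  rwa [Real.norm_of_nonneg (sq_nonneg _)]

lemma sqrt_integral_sq_integral_mul_le (hK : MemLp (fun p : α × β => K p.1 p.2) 2 (μ.prod ν))
    (hh : MemLp h 2 ν) :
    √(∫ x, (∫ y, K x y * h y ∂ν) ^ 2 ∂μ) ≤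
      √(∫ p, K p.1 p.2 ^ 2 ∂(μ.prod ν)) * √(∫ y, h y ^ 2 ∂ν) := by
  rw [← Real.sqrt_mul (integral_nonneg fun _ => sq_nonneg _), integral_prod _ hK.integrable_sq,
    ← integral_mul_const]
  exact Real.sqrt_le_sqrt <| integral_mono_of_nonneg (ae_of_all _ fun _ => sq_nonneg _)
    (hK.integrable_sq.integral_prod_left.mul_const _) (ae_sq_integral_mul_le hK hh)

end HilbertSchmidt

lemma _root_.LipschitzWith.memLp_comp {E F : Type*} [NormedAddCommGroup E] [NormedAddCommGroup F]
    [IsFiniteMeasure μ] {p : ℝ≥0∞} {K : ℝ≥0} {g : E → F} (hg : LipschitzWith K g) {f : α → E}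
    (hf : MemLp f p μ) : MemLp (g ∘ f) p μ := by
  have h := (hg.sub (LipschitzWith.const (g 0))).comp_memLp (sub_self _) hf
  convert h.add (memLp_const (g 0)) using 1
  ext x
  simp

lemma abs_integral_mul_comp_sub_sub_le [IsFiniteMeasure μ] {k u v : α → ℝ} {D : ℝ → ℝ}
    {L : ℝ≥0} (hD : LipschitzWith L D) (hk_nonneg : ∀ y, 0 ≤ k y) (hk : MemLp k 2 μ)
    (hu : MemLp u 2 μ) (hv : MemLp v 2 μ) (a b : ℝ) :
    |∫ y, k y * D (u y - a) ∂μ - ∫ y, k y * D (v y - b) ∂μ| ≤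
      L * (∫ y, k y * |u y - v y| ∂μ + |a - b| * ∫ y, k y ∂μ) := by
  have hDu : Integrable (fun y => k y * D (u y - a)) μ :=
    hk.integrable_mul (hD.memLp_comp (hu.sub (memLp_const a)))
  have hDv : Integrable (fun y => k y * D (v y - b)) μ :=
    hk.integrable_mul (hD.memLp_comp (hv.sub (memLp_const b)))
  have hkuv : Integrable (fun y => k y * |u y - v y|) μ := hk.integrable_mul (hu.sub hv).abs
  have hk1 : Integrable k μ := hk.integrable one_le_two
  rw [← integral_sub hDu hDv]
  calc |∫ y, (k y * D (u y - a) - k y * D (v y - b)) ∂μ|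
      ≤ ∫ y, |k y * D (u y - a) - k y * D (v y - b)| ∂μ := abs_integral_le_integral_abs
    _ ≤ ∫ y, (L * (k y * |u y - v y|) + L * |a - b| * k y) ∂μ := by
      refine integral_mono_of_nonneg (ae_of_all _ fun _ => abs_nonneg _)
        ((hkuv.const_mul _).add (hk1.const_mul _)) (ae_of_all _ fun y => ?_)
      have hLip : |D (u y - a) - D (v y - b)| ≤ L * |(u y - a) - (v y - b)| := by
        simpa only [Real.dist_eq] using hD.dist_le_mul (u y - a) (v y - b)
      have htri : |(u y - a) - (v y - b)| ≤ |u y - v y| + |a - b| := by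
        rw [sub_sub_sub_comm]; exact abs_sub _ _
      simp only [← mul_sub, abs_mul, abs_of_nonneg (hk_nonneg y)]
      calc k y * |D (u y - a) - D (v y - b)| ≤ k y * (L * (|u y - v y| + |a - b|)) :=
            mul_le_mul_of_nonneg_left (hLip.trans (by gcongr)) (hk_nonneg y)
        _ = _ := by ring
    _ = L * (∫ y, k y * |u y - v y| ∂μ + |a - b| * ∫ y, k y ∂μ) := by
      rw [integral_add (hkuv.const_mul _) (hk1.const_mul _), integral_const_mul,
        integral_const_mul]
      ring

end MeasureTheory

lemma nonneg_of_abs_sub_le_mul {g : ℝ → ℝ} {L : ℝ} (h : ∀ a b, |g a - g b| ≤ L * |a - b|) :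
    0 ≤ L := by
  simpa using (abs_nonneg _).trans (h 1 0)

instance isFiniteMeasure_restrict_unitI : IsFiniteMeasure (volume.restrict unitI) :=
  isFiniteMeasure_restrict.2 (by simp [unitI])

lemma nonneg_of_ae_integral_le {W : ℝ → ℝ → ℝ} (hWnn : ∀ x y, 0 ≤ W x y) {W2 : ℝ}
    (hdeg : ∀ᵐ x ∂(volume.restrict unitI), ∫ y in unitI, W x y ≤ W2) : 0 ≤ W2 := by
  have : (ae (volume.restrict unitI)).NeBot := ae_neBot.2 (by simp [unitI])
  obtain ⟨x, hx⟩ := hdeg.exists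
  exact (integral_nonneg (hWnn x)).trans hx

lemma ae_abs_sub_le {W : ℝ → ℝ → ℝ} (hWnn : ∀ x y, 0 ≤ W x y)
    (hW : MemLp (fun p : ℝ × ℝ => W p.1 p.2) 2
      ((volume.restrict unitI).prod (volume.restrict unitI)))
    {W2 : ℝ} (hdeg : ∀ᵐ x ∂(volume.restrict unitI), ∫ y in unitI, W x y ≤ W2)
    {φ : ℝ → ℝ} {Lφ : ℝ} (hφ : ∀ a b, |φ a - φ b| ≤ Lφ * |a - b|)
    {D : ℝ → ℝ} {L : ℝ} (hD : ∀ a b, |D a - D b| ≤ L * |a - b|) {u v : ℝ → ℝ}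
    (hu : MemLp u 2 (volume.restrict unitI)) (hv : MemLp v 2 (volume.restrict unitI)) :
    ∀ᵐ x ∂(volume.restrict unitI),
      |(φ (u x) + Kop W D u x) - (φ (v x) + Kop W D v x)| ≤
        (Lφ + L * W2) * |u x - v x| + L * ∫ y in unitI, W x y * |u y - v y| := by
  have hL : 0 ≤ L := nonneg_of_abs_sub_le_mul hD
  have hDlip : LipschitzWith L.toNNReal D := .of_dist_le' (by simpa only [Real.dist_eq] using hD)
  filter_upwards [hdeg, hW.ae_memLp_two_prodMk_left] with x hdeg_x hWx
  have hK := abs_integral_mul_comp_sub_sub_le hDlip (hWnn x) hWx hu hv (u x) (v x)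
  rw [Real.coe_toNNReal _ hL] at hK
  calc |(φ (u x) + Kop W D u x) - (φ (v x) + Kop W D v x)|
      = |(φ (u x) - φ (v x)) + (Kop W D u x - Kop W D v x)| := by ring_nf
    _ ≤ Lφ * |u x - v x| +
          L * ((∫ y in unitI, W x y * |u y - v y|) + |u x - v x| * ∫ y in unitI, W x y) :=
      (abs_add_le _ _).trans (add_le_add (hφ _ _) hK)
    _ ≤ Lφ * |u x - v x| + L * ((∫ y in unitI, W x y * |u y - v y|) + |u x - v x| * W2) := by
      gcongr
    _ = (Lφ + L * W2) * |u x - v x| + L * ∫ y in unitI, W x y * |u y - v y| := by ring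

theorem stmt6
    (W : ℝ → ℝ → ℝ) (hWnn : ∀ x y, 0 ≤ W x y)
    (hW : MeasureTheory.MemLp (fun p : ℝ × ℝ => W p.1 p.2) 2
      ((volume : Measure (ℝ × ℝ)).restrict (unitI ×ˢ unitI)))
    (W2 : ℝ) (hdeg : ∀ᵐ x ∂(volume.restrict unitI), ∫ y in unitI, W x y ≤ W2)
    (f : ℝ → ℝ → ℝ) (Lf : ℝ) (hf : ∀ t a b, |f a t - f b t| ≤ Lf * |a - b|)
    (D : ℝ → ℝ) (LD : ℝ) (hD : ∀ a b, |D a - D b| ≤ LD * |a - b|) :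
    ∀ t : ℝ, ∀ u v : ℝ → ℝ,
      MeasureTheory.MemLp u 2 (volume.restrict unitI) →
      MeasureTheory.MemLp v 2 (volume.restrict unitI) →
      l2norm (fun x => (f (u x) t + Kop W D u x) - (f (v x) t + Kop W D v x)) ≤
        (Lf + LD * (l2norm2 W + W2)) * l2norm (fun x => u x - v x) := by
  intro t u v hu hv
  set μ := volume.restrict unitI
  have hLf : 0 ≤ Lf := nonneg_of_abs_sub_le_mul (hf t)
  have hLD : 0 ≤ LD := nonneg_of_abs_sub_le_mul hD
  have hW2 : 0 ≤ W2 := nonneg_of_ae_integral_le hWnn hdeg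
  have hprod : (volume : Measure (ℝ × ℝ)).restrict (unitI ×ˢ unitI) = μ.prod μ := by
    rw [Measure.volume_eq_prod, ← Measure.prod_restrict]
  have hWμ : MemLp (fun p : ℝ × ℝ => W p.1 p.2) 2 (μ.prod μ) := hprod ▸ hW
  have hw : MemLp (fun x => |u x - v x|) 2 μ := (hu.sub hv).abs
  have hWw : √(∫ x, (∫ y in unitI, W x y * |u y - v y|) ^ 2 ∂μ) ≤
      l2norm2 W * l2norm (fun x => u x - v x) := by
    simpa only [l2norm, l2norm2, hprod, sqrt_integral_sq_abs] using
      sqrt_integral_sq_integral_mul_le hWμ hw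
  calc l2norm (fun x => (f (u x) t + Kop W D u x) - (f (v x) t + Kop W D v x))
      ≤ (Lf + LD * W2) * l2norm (fun x => u x - v x) +
          LD * √(∫ x, (∫ y in unitI, W x y * |u y - v y|) ^ 2 ∂μ) :=
        sqrt_integral_sq_le_of_ae_abs_le_add (by positivity) hLD (hu.sub hv)
          (memLp_two_integral_mul hWμ hw) (ae_abs_sub_le hWnn hWμ hdeg (hf t) hD hu hv)
    _ ≤ (Lf + LD * W2) * l2norm (fun x => u x - v x) +
          LD * (l2norm2 W * l2norm (fun x => u x - v x)) := by gcongr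
    _ = (Lf + LD * (l2norm2 W + W2)) * l2norm (fun x => u x - v x) := by ring
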